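/- For the array Φ₁₇ with rows (p₀₄,p₁₂,q₁₂,e₃,q₀₄,e₅), (p₂₃,e₅,e₄,p₀₁,q₂₃,q₀₁), (p₁₅,p₀₃,q₀₃,p₂₄,q₁₅,q₂₄), (q₀₄,q₁₂,p₁₂,e₅,p₀₄,e₃), (q₂₃,e₄,e₅,q₀₁,p₂₃,p₀₁), (q₁₅,q₀₃,p₀₃,q₂₄,p₁₅,p₂₄), every column, i.e. each of the six families i ↦ Φ₁₇ i j, is an orthonormal basis of ℂ^6. -/

import Mathlib

noncomputable section

/-- `ℂ^6` as a complex inner product space. -/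
abbrev E6 : Type := EuclideanSpace ℂ (Fin 6)

/-- The standard basis vector `e_k` of `ℂ^6`. -/
def ev (k : Fin 6) : E6 := EuclideanSpace.single k 1

/-- `p_{ij} = (e_i + e_j)/√2`. -/
def pv (i j : Fin 6) : E6 := (Real.sqrt 2 : ℂ)⁻¹ • (ev i + ev j)

/-- `q_{ij} = (e_i − e_j)/√2`. -/
def qv (i j : Fin 6) : E6 := (Real.sqrt 2 : ℂ)⁻¹ • (ev i - ev j)

/-- The array `Φ₁₇`. -/
def Phi17 : Fin 6 → Fin 6 → E6 :=
  ![![pv 0 4, pv 1 2, qv 1 2, ev 3, qv 0 4, ev 5],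
    ![pv 2 3, ev 5, ev 4, pv 0 1, qv 2 3, qv 0 1],
    ![pv 1 5, pv 0 3, qv 0 3, pv 2 4, qv 1 5, qv 2 4],
    ![qv 0 4, qv 1 2, pv 1 2, ev 5, pv 0 4, ev 3],
    ![qv 2 3, ev 4, ev 5, qv 0 1, pv 2 3, pv 0 1],
    ![qv 1 5, qv 0 3, pv 0 3, qv 2 4, pv 1 5, pv 2 4]]

/-! Every entry of `Φ₁₇` is `e_a` or `(e_a ± e_b)/√2`, so by sesquilinearity each inner product of
two entries reduces to `⟪e_a, e_b⟫ = δ_ab` and `(1/√2)² = 1/2`, which settles the Gram matrix of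
every column. Six orthonormal vectors of the six-dimensional space `ℂ^6` span it. -/

lemma inner_ev_ev (a b : Fin 6) : inner ℂ (ev a) (ev b) = if a = b then 1 else 0 := by
  simp [ev, EuclideanSpace.inner_single_left, PiLp.single_apply]

lemma inv_sqrt_two_mul_self : (Real.sqrt 2 : ℂ)⁻¹ * (Real.sqrt 2 : ℂ)⁻¹ = 2⁻¹ := by
  rw [← mul_inv, ← Complex.ofReal_mul, Real.mul_self_sqrt zero_le_two, Complex.ofReal_ofNat]

set_option maxHeartbeats 800000 in
lemma orthonormal_Phi17_col (j : Fin 6) : Orthonormal ℂ fun i => Phi17 i j := by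
  rw [orthonormal_iff_ite]
  intro i i'
  fin_cases j <;> fin_cases i <;> fin_cases i' <;>
    simp [Phi17, pv, qv, inner_add_left, inner_add_right, inner_sub_left, inner_sub_right,
      inner_smul_left, inner_smul_right, inner_ev_ev, mul_add, inv_sqrt_two_mul_self,
      -inner_self_eq_norm_sq_to_K] <;>
    norm_num

/-- Every column of `Φ₁₇` is an orthonormal basis of `ℂ^6`. -/
theorem Phi17_cols_orthonormal_basis :
    ∀ j : Fin 6, Orthonormal ℂ (fun i => Phi17 i j) ∧
      Submodule.span ℂ (Set.range fun i => Phi17 i j) = ⊤ := by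
  intro j
  have hj := orthonormal_Phi17_col j
  exact ⟨hj, hj.linearIndependent.span_eq_top_of_card_eq_finrank (by simp)⟩
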